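/- arXiv:1807.06862 — 8 statements merged into one kernel-verified Lean document; each statement's English description precedes it below -/
import Mathlib

section
/- Let f : 𝕀 → 𝕀 be monotone. Then f^∧ is the least meet-continuous function above f (that is, f^∧ is meet-continuous, f ≤ f^∧ pointwise, and for every meet-continuous g with f ≤ g one has f^∧ ≤ g), and dually f^∨ is the greatest join-continuous function below f. -/
noncomputable section

instance : Fact ((0:ℝ) ≤ 1) := ⟨zero_le_one⟩

/-- `𝕀` is the real unit interval `[0,1]`, a complete lattice. -/
notation "𝕀" => unitInterval

/-- `f^∧(x) = ⨅_{x < x'} f x'`, the meet-continuous closure data of `f`. -/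
def mCl (f : 𝕀 → 𝕀) : 𝕀 → 𝕀 :=
  fun x => ⨅ y : {y : 𝕀 // x < y}, f y.1

/-- `f^∨(x) = ⨆_{x' < x} f x'`, the join-continuous closure data of `f`. -/
def jCl (f : 𝕀 → 𝕀) : 𝕀 → 𝕀 :=
  fun x => ⨆ y : {y : 𝕀 // y.1 < x}, f y.1

/-- `f` is join-continuous: it preserves all suprema. -/
def JoinCont (f : 𝕀 → 𝕀) : Prop :=
  ∀ S : Set 𝕀, f (sSup S) = ⨆ x ∈ S, f x

/-- `f` is meet-continuous: it preserves all infima. -/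
def MeetCont (f : 𝕀 → 𝕀) : Prop :=
  ∀ S : Set 𝕀, f (sInf S) = ⨅ x ∈ S, f x

/-- The right adjoint `f^ρ` of a join-continuous `f`. -/
def radj (f : 𝕀 → 𝕀) : 𝕀 → 𝕀 := fun y => sSup {x | f x ≤ y}

/-- The left adjoint `g^λ` of a meet-continuous `g`. -/
def ladj (g : 𝕀 → 𝕀) : 𝕀 → 𝕀 := fun y => sInf {x | y ≤ g x}

/-- `f* := (f^ρ)^∨`. -/
def starF (f : 𝕀 → 𝕀) : 𝕀 → 𝕀 := jCl (radj f)

/-- `f ⊗ g := g ∘ f`. -/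
def otimes (f g : 𝕀 → 𝕀) : 𝕀 → 𝕀 := g ∘ f

/-- `f ⊕ g := (g^∧ ∘ f^∧)^∨`. -/
def oplus (f g : 𝕀 → 𝕀) : 𝕀 → 𝕀 := jCl (mCl g ∘ mCl f)

/-- A tuple is closed if `f_{i,j} ⊗ f_{j,k} ≤ f_{i,k}` for `i < j < k`. -/
def ClosedT (d : ℕ) (f : Fin d → Fin d → (𝕀 → 𝕀)) : Prop :=
  ∀ i j k : Fin d, i < j → j < k → ∀ x, otimes (f i j) (f j k) x ≤ f i k x

/-- A tuple is open if `f_{i,k} ≤ f_{i,j} ⊕ f_{j,k}` for `i < j < k`. -/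
def OpenT (d : ℕ) (f : Fin d → Fin d → (𝕀 → 𝕀)) : Prop :=
  ∀ i j k : Fin d, i < j → j < k → ∀ x, f i k x ≤ oplus (f i j) (f j k) x

/-- Pointwise order on the meaningful (`i < j`) entries of tuples. -/
def TLE (d : ℕ) (f g : Fin d → Fin d → (𝕀 → 𝕀)) : Prop :=
  ∀ i j : Fin d, i < j → ∀ x, f i j x ≤ g i j x

/-- Each meaningful entry of the tuple is join-continuous. -/
def TupleJC (d : ℕ) (f : Fin d → Fin d → (𝕀 → 𝕀)) : Prop :=
  ∀ i j : Fin d, i < j → JoinCont (f i j)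

/-- `⊕`-value of a subdivision `ℓ₀ < ℓ₁ < … < ℓ_k`:
`f_{ℓ₀,ℓ₁} ⊕ f_{ℓ₁,ℓ₂} ⊕ … ⊕ f_{ℓ_{k-1},ℓ_k}`. -/
def oplusChain {d : ℕ} (f : Fin d → Fin d → (𝕀 → 𝕀)) : List (Fin d) → (𝕀 → 𝕀)
  | [] => id
  | [_] => id
  | a :: b :: l => oplus (f a b) (oplusChain f (b :: l))

/-- Subdivisions of the interval `[i,j]`: strictly increasing lists from `i` to `j`. -/
def Subdiv (d : ℕ) (i j : Fin d) : Set (List (Fin d)) :=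
  {L | L.Chain' (· < ·) ∧ L.head? = some i ∧ L.getLast? = some j}

/-- The interior of a tuple: `interior(f)_{i,j}` is the infimum, over all subdivisions
`i = ℓ₀ < ℓ₁ < … < ℓ_k = j`, of `f_{ℓ₀,ℓ₁} ⊕ … ⊕ f_{ℓ_{k-1},ℓ_k}`. -/
def interiorT (d : ℕ) (f : Fin d → Fin d → (𝕀 → 𝕀)) : Fin d → Fin d → (𝕀 → 𝕀) :=
  fun i j => ⨅ L : Subdiv d i j, oplusChain f L.1

/-- The chain `C_f ⊆ 𝕀²` associated to a monotone `f : 𝕀 → 𝕀`. -/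
def Cf2 (f : 𝕀 → 𝕀) : Set (𝕀 × 𝕀) :=
  {p | jCl f p.1 ≤ p.2 ∧ p.2 ≤ mCl f p.1}

/-- `f_C^-(x) = ⨅ {y | (x,y) ∈ C}`. -/
def fCm (C : Set (𝕀 × 𝕀)) : 𝕀 → 𝕀 := fun x => sInf {y | (x, y) ∈ C}

/-- `f_C^+(x) = ⨆ {y | (x,y) ∈ C}`. -/
def fCp (C : Set (𝕀 × 𝕀)) : 𝕀 → 𝕀 := fun x => sSup {y | (x, y) ∈ C}

/-- Compatibility of a (fully extended) tuple: `f_{j,k} ∘ f_{i,j} ≤ f_{i,k}` for all `i,j,k`. -/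
def Compatible (d : ℕ) (f : Fin d → Fin d → (𝕀 → 𝕀)) : Prop :=
  ∀ i j k : Fin d, ∀ x, f j k (f i j x) ≤ f i k x

/-- The subset `C_f ⊆ 𝕀^d` associated to a compatible tuple. -/
def Cfd (d : ℕ) (f : Fin d → Fin d → (𝕀 → 𝕀)) : Set (Fin d → 𝕀) :=
  {x | ∀ i j : Fin d, f i j (x i) ≤ x j}

/-- `v(C)_{i,j}(x) = ⨅ {c_j | c ∈ C, c_i = x}`. -/
def vC (d : ℕ) (C : Set (Fin d → 𝕀)) (i j : Fin d) : 𝕀 → 𝕀 :=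
  fun x => sInf {z | ∃ c ∈ C, c i = x ∧ c j = z}

/-- Canonical extension of a tuple given on `i < j` to all pairs:
identity on the diagonal and `f_{j,i} := (f_{i,j})*` below it. -/
def extT (d : ℕ) (g : Fin d → Fin d → (𝕀 → 𝕀)) : Fin d → Fin d → (𝕀 → 𝕀) :=
  fun i j => if i < j then g i j else if j < i then starF (g j i) else id

/-- The one-step function `h_{x,y}`. -/
def oneStep (x y : 𝕀) : 𝕀 → 𝕀 := fun t => if t ≤ x then 0 else y



lemma aux_sInf_gt (x : 𝕀) : sInf {y : 𝕀 | x < y} = x := by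
  refine le_antisymm ?_ (le_sInf fun y hy => hy.le)
  by_contra h
  push_neg at h
  obtain ⟨z, hz1, hz2⟩ := exists_between h
  exact absurd (sInf_le (show z ∈ {y : 𝕀 | x < y} from hz1)) (not_le.2 hz2)

lemma aux_sSup_lt (x : 𝕀) : sSup {y : 𝕀 | y < x} = x := by
  refine le_antisymm (sSup_le fun y hy => hy.le) ?_
  by_contra h
  push_neg at h
  obtain ⟨z, hz1, hz2⟩ := exists_between h
  exact absurd (le_sSup (show z ∈ {y : 𝕀 | y < x} from hz2)) (not_le.2 hz1)

lemma mCl_mono (f : 𝕀 → 𝕀) : Monotone (mCl f) := fun a b hab =>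
  le_iInf fun y => iInf_le (fun y : {y : 𝕀 // a < y} => f y.1) ⟨y.1, hab.trans_lt y.2⟩

lemma jCl_mono (f : 𝕀 → 𝕀) : Monotone (jCl f) := fun a b hab =>
  iSup_le fun y => le_iSup (fun y : {y : 𝕀 // y.1 < b} => f y.1) ⟨y.1, y.2.trans_le hab⟩

/-- `f^∧` is the least meet-continuous function above `f`, and
`f^∨` is the greatest join-continuous function below `f`. -/
theorem statement1 (f : 𝕀 → 𝕀) (hf : Monotone f) :
    (MeetCont (mCl f) ∧ (∀ x, f x ≤ mCl f x) ∧
      ∀ g : 𝕀 → 𝕀, MeetCont g → (∀ x, f x ≤ g x) → ∀ x, mCl f x ≤ g x) ∧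
    (JoinCont (jCl f) ∧ (∀ x, jCl f x ≤ f x) ∧
      ∀ g : 𝕀 → 𝕀, JoinCont g → (∀ x, g x ≤ f x) → ∀ x, g x ≤ jCl f x) := by
  constructor
  · refine ⟨?_, ?_, ?_⟩
    · intro S
      refine le_antisymm (le_iInf₂ fun s hs => mCl_mono f (sInf_le hs)) ?_
      refine le_iInf fun y => ?_
      obtain ⟨s, hs, hsy⟩ := sInf_lt_iff.mp y.2
      exact iInf₂_le_of_le s hs (iInf_le (fun z : {z : 𝕀 // s < z} => f z.1) ⟨y.1, hsy⟩)
    · intro x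
      exact le_iInf fun y => hf y.2.le
    · intro g hg hfg x
      have hx : g x = ⨅ y : {y : 𝕀 // x < y}, g y.1 := by
        conv_lhs => rw [← aux_sInf_gt x, hg, iInf_subtype']
        rfl
      rw [hx]
      exact le_iInf fun y => iInf_le_of_le y (hfg y.1)
  · refine ⟨?_, ?_, ?_⟩
    · intro S
      refine le_antisymm ?_ (iSup₂_le fun s hs => jCl_mono f (le_sSup hs))
      refine iSup_le fun y => ?_
      obtain ⟨s, hs, hsy⟩ := lt_sSup_iff.mp (show (y.1 : 𝕀) < sSup S from y.2)
      exact le_iSup₂_of_le s hs (le_iSup (fun z : {z : 𝕀 // z.1 < s} => f z.1) ⟨y.1, hsy⟩)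
    · intro x
      exact iSup_le fun y => hf y.2.le
    · intro g hg hfg x
      have hx : g x = ⨆ y : {y : 𝕀 // y.1 < x}, g y.1 := by
        conv_lhs => rw [← aux_sSup_lt x, hg, iSup_subtype']
        rfl
      rw [hx]
      exact iSup_le fun y => le_iSup_of_le y (hfg y.1)


end
end

section
/- For each f ∈ ℒ∨(𝕀), the relation (f^ρ)^∨ = (f^∧)^λ holds; equivalently, for all x, y ∈ 𝕀 one has x ≤ f^∧(y) if and only if (f^ρ)^∨(x) ≤ y. -/
noncomputable section

/-- for `f ∈ ℒ∨(𝕀)`, `(f^ρ)^∨ = (f^∧)^λ`; equivalently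
`x ≤ f^∧(y) ↔ (f^ρ)^∨(x) ≤ y`. -/
theorem statement3 (f : 𝕀 → 𝕀) (hf : JoinCont f) :
    jCl (radj f) = ladj (mCl f) ∧
    ∀ x y : 𝕀, x ≤ mCl f y ↔ jCl (radj f) x ≤ y := by
  have key : ∀ x y : 𝕀, x ≤ mCl f y ↔ jCl (radj f) x ≤ y := by
    intro x y
    constructor
    · intro h
      apply iSup_le; rintro ⟨x', hx'⟩
      apply sSup_le; intro z hz
      by_contra hzy
      push_neg at hzy
      have hle : mCl f y ≤ f z := iInf_le (fun w : {w : 𝕀 // y < w} => f w.1) ⟨z, hzy⟩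
      exact absurd (le_trans (le_trans h hle) hz) (not_le.mpr hx')
    · intro h
      apply le_iInf; rintro ⟨y', hy'⟩
      by_contra hxy
      push_neg at hxy
      have h1 : radj f (f y') ≤ jCl (radj f) x :=
        le_iSup (fun w : {w : 𝕀 // w.1 < x} => radj f w.1) ⟨f y', hxy⟩
      have h2 : y' ≤ radj f (f y') := le_sSup (le_refl (f y'))
      exact absurd (le_trans h2 (le_trans h1 h)) (not_le.mpr hy')
  refine ⟨?_, key⟩
  funext x
  have h1 : x ≤ mCl f (jCl (radj f) x) := (key x _).mpr le_rfl
  exact le_antisymm (le_sInf fun z hz => (key x z).mp hz) (sInf_le h1)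

end
end

section
/- The map f ↦ f* is an order-reversing involution of ℒ∨(𝕀): for every f ∈ ℒ∨(𝕀), f* is again join-continuous, f** = f, and for f, g ∈ ℒ∨(𝕀) with f ≤ g pointwise one has g* ≤ f* pointwise. -/
noncomputable section

lemma bot01 : (⊥ : 𝕀) = 0 :=
  le_antisymm bot_le (Subtype.coe_le_coe.mp (⊥ : 𝕀).2.1)

lemma mono_of_JC {f : 𝕀 → 𝕀} (hf : JoinCont f) : Monotone f := by
  intro a b hab
  have h := hf {a, b}
  have hs : sSup {a, b} = b := by
    rw [sSup_pair, sup_eq_right.mpr hab]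
  rw [hs] at h
  rw [h]
  exact le_iSup₂ (f := fun x (_ : x ∈ ({a, b} : Set 𝕀)) => f x) a (by simp)

lemma lt_sSup' {S : Set 𝕀} {b : 𝕀} (h : b < sSup S) : ∃ a ∈ S, b < a := by
  by_contra hc
  push_neg at hc
  exact absurd (sSup_le hc) (not_le.mpr h)

lemma jCl_JC (g : 𝕀 → 𝕀) : JoinCont (jCl g) := by
  intro S
  apply le_antisymm
  · apply iSup_le
    rintro ⟨y, hy⟩
    obtain ⟨a, haS, hya⟩ := lt_sSup' hy
    calc g y ≤ ⨆ z : {z : 𝕀 // z.1 < a}, g z.1 := le_iSup (fun z : {z : 𝕀 // z.1 < a} => g z.1) ⟨y, hya⟩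
      _ ≤ ⨆ x ∈ S, jCl g x := le_iSup₂ (f := fun x (_ : x ∈ S) => jCl g x) a haS
  · apply iSup₂_le
    intro x hx
    apply iSup_le
    rintro ⟨y, hy⟩
    exact le_iSup (fun z : {z : 𝕀 // z.1 < sSup S} => g z.1) ⟨y, lt_of_lt_of_le hy (le_sSup hx)⟩

lemma star_eq (f : 𝕀 → 𝕀) (y : 𝕀) : starF f y = sSup {x | f x < y} := by
  apply le_antisymm
  · apply iSup_le
    rintro ⟨z, hz⟩
    apply sSup_le
    intro x hx
    exact le_sSup (lt_of_le_of_lt hx hz)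
  · apply sSup_le
    intro x hx
    calc x ≤ sSup {x' | f x' ≤ f x} := le_sSup (show f x ≤ f x from le_rfl)
      _ ≤ starF f y := le_iSup (fun z : {z : 𝕀 // z.1 < y} => radj f z.1) ⟨f x, hx⟩

lemma sSup_lt_self (x : 𝕀) : sSup {z : 𝕀 | z < x} = x := by
  rcases eq_or_lt_of_le (bot_le : ⊥ ≤ x) with h | h
  · apply le_antisymm
    · exact sSup_le fun z hz => le_of_lt hz
    · rw [← h]
      apply le_antisymm le_rfl bot_le |>.le.trans
      exact bot_le
  · apply le_antisymm (sSup_le fun z hz => le_of_lt hz)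
    by_contra hc
    push_neg at hc
    obtain ⟨m, h1, h2⟩ := exists_between hc
    exact absurd (le_sSup (show m ∈ {z : 𝕀 | z < x} from h2)) (not_le.mpr h1)

lemma JC_sup_lt {f : 𝕀 → 𝕀} (hf : JoinCont f) (x : 𝕀) :
    f x = ⨆ z : {z : 𝕀 // z.1 < x}, f z.1 := by
  conv_lhs => rw [← sSup_lt_self x, hf]
  apply le_antisymm
  · apply iSup₂_le
    intro z hz
    exact le_iSup (fun w : {w : 𝕀 // w.1 < x} => f w.1) ⟨z, Subtype.coe_lt_coe.mpr hz⟩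
  · apply iSup_le
    rintro ⟨z, hz⟩
    exact le_iSup₂ (f := fun w (_ : w ∈ {w : 𝕀 | w < x}) => f w) z (Subtype.coe_lt_coe.mp hz)

lemma starF_starF {f : 𝕀 → 𝕀} (hf : JoinCont f) : starF (starF f) = f := by
  have hmono := mono_of_JC hf
  funext x
  rw [star_eq]
  apply le_antisymm
  · apply sSup_le
    intro y hy
    simp only [Set.mem_setOf_eq, star_eq] at hy
    by_contra hc
    push_neg at hc
    have : x ≤ sSup {z | f z < y} := le_sSup hc
    exact absurd this (not_le.mpr hy)
  · rw [JC_sup_lt hf x]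
    apply iSup_le
    rintro ⟨z, hz⟩
    apply le_sSup
    show starF f (f z) < x
    rw [star_eq]
    refine lt_of_le_of_lt (sSup_le fun w hw => ?_) hz
    by_contra hcw
    push_neg at hcw
    exact absurd (hmono hcw.le) (not_le.mpr hw)

/-- `f ↦ f*` is an order-reversing involution of `ℒ∨(𝕀)`. -/
theorem statement4 :
    (∀ f : 𝕀 → 𝕀, JoinCont f → JoinCont (starF f) ∧ starF (starF f) = f) ∧
    (∀ f g : 𝕀 → 𝕀, JoinCont f → JoinCont g →
      (∀ x, f x ≤ g x) → ∀ x, starF g x ≤ starF f x) := by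
  constructor
  · intro f hf
    exact ⟨jCl_JC (radj f), starF_starF hf⟩
  · intro f g _ _ hfg x
    rw [star_eq, star_eq]
    exact sSup_le fun z hz => le_sSup (lt_of_le_of_lt (hfg z) hz)

end
end

section
/- The identity function is a unit for both operations ⊗ and ⊕ on ℒ∨(𝕀), and the mix rule holds: for all f, g ∈ ℒ∨(𝕀), f ⊗ g ≤ f ⊕ g, i.e. g(f(x)) ≤ (f ⊕ g)(x) for every x ∈ 𝕀. -/
noncomputable section

/-! Being join-continuous, `f` is left-continuous, so `f^∨ = f`; as `𝕀` is densely ordered,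
also `id^∧ = id` and `(f^∧)^∨ = f`, which gives the unit laws. The mix rule follows by applying
the monotone operation `(·)^∨` to `g ∘ f ≤ g^∧ ∘ f^∧`. -/

lemma jCl_mono_s6 {f g : 𝕀 → 𝕀} (h : f ≤ g) : jCl f ≤ jCl g :=
  fun _ => iSup_mono fun y => h y.1

lemma le_mCl {f : 𝕀 → 𝕀} (hf : Monotone f) : f ≤ mCl f :=
  fun _ => le_iInf fun y => hf y.2.le

lemma mCl_le_of_lt (f : 𝕀 → 𝕀) {x y : 𝕀} (h : y < x) : mCl f y ≤ f x :=
  iInf_le (fun z : {z : 𝕀 // y < z} => f z.1) ⟨x, h⟩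

lemma mCl_id : mCl (id : 𝕀 → 𝕀) = id :=
  funext fun x => (sInf_eq_iInf' (Set.Ioi x)).symm.trans isGLB_Ioi.sInf_eq

namespace JoinCont

variable {f g : 𝕀 → 𝕀}

def toSSupHom (hf : JoinCont f) : sSupHom 𝕀 𝕀 :=
  ⟨f, fun S => by rw [hf S, sSup_image]⟩

lemma monotone (hf : JoinCont f) : Monotone f :=
  OrderHomClass.mono hf.toSSupHom

lemma comp (hf : JoinCont f) (hg : JoinCont g) : JoinCont (g ∘ f) := fun S => by
  rw [← sSup_image]
  exact map_sSup (hg.toSSupHom.comp hf.toSSupHom) S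

lemma jCl_eq_self (hf : JoinCont f) : jCl f = f := funext fun x => by
  change ⨆ y : Set.Iio x, f y = f x
  rw [iSup_subtype'', ← hf, isLUB_Iio.sSup_eq]

lemma jCl_mCl (hf : JoinCont f) : jCl (mCl f) = f :=
  le_antisymm (fun _ => iSup_le fun y => mCl_le_of_lt f y.2)
    (hf.jCl_eq_self.symm.le.trans (jCl_mono_s6 (le_mCl hf.monotone)))

lemma id_oplus (hf : JoinCont f) : oplus id f = f := by
  rw [oplus, mCl_id, Function.comp_id, hf.jCl_mCl]

lemma oplus_id (hf : JoinCont f) : oplus f id = f := by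
  rw [oplus, mCl_id, Function.id_comp, hf.jCl_mCl]

lemma comp_le_oplus (hf : JoinCont f) (hg : JoinCont g) : g ∘ f ≤ oplus f g := by
  rw [← (hf.comp hg).jCl_eq_self]
  exact jCl_mono_s6 fun x => (hg.monotone (le_mCl hf.monotone x)).trans (le_mCl hg.monotone _)

end JoinCont

/-- the identity is a unit for both `⊗` and `⊕` on `ℒ∨(𝕀)`, and the
mix rule `f ⊗ g ≤ f ⊕ g` holds. -/
theorem statement6 :
    (∀ f : 𝕀 → 𝕀, JoinCont f →
      otimes id f = f ∧ otimes f id = f ∧ oplus id f = f ∧ oplus f id = f) ∧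
    (∀ f g : 𝕀 → 𝕀, JoinCont f → JoinCont g → ∀ x, g (f x) ≤ oplus f g x) :=
  ⟨fun _ hf => ⟨rfl, rfl, hf.id_oplus, hf.oplus_id⟩,
    fun _ _ hf hg => hf.comp_le_oplus hg⟩

end
end

section
/- Let d ≥ 2 and C ⊆ 𝕀^d. Then C is a maximal chain of 𝕀^d if and only if C is a chain such that (1) for every subset X ⊆ C both ⨆X and ⨅X (computed in 𝕀^d) belong to C, and (2) C is order-dense: whenever x, y ∈ C with x < y there exists z ∈ C with x < z < y. -/
noncomputable section

lemma maxChain_mem_of_comparable {α : Type*} [Preorder α] {C : Set α}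
    (h : IsMaxChain (· ≤ ·) C) {a : α} (ha : ∀ c ∈ C, a ≤ c ∨ c ≤ a) : a ∈ C := by
  have hch : IsChain (· ≤ ·) (insert a C) :=
    h.1.insert fun b hb _ => ha b hb
  have := h.2 hch (Set.subset_insert _ _)
  rw [this]
  exact Set.mem_insert _ _

/-- `C ⊆ 𝕀^d` is a maximal chain iff it is a chain closed under all
suprema and infima of its subsets and order-dense. -/
theorem statement10 (d : ℕ) (hd : 2 ≤ d) (C : Set (Fin d → 𝕀)) :
    IsMaxChain (· ≤ ·) C ↔
      (IsChain (· ≤ ·) C ∧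
        (∀ X : Set (Fin d → 𝕀), X ⊆ C → sSup X ∈ C ∧ sInf X ∈ C) ∧
        (∀ x ∈ C, ∀ y ∈ C, x < y → ∃ z ∈ C, x < z ∧ z < y)) := by
  constructor
  · intro hmax
    have hC := hmax.1
    refine ⟨hC, ?_, ?_⟩
    · intro X hX
      constructor
      · apply maxChain_mem_of_comparable hmax
        intro c hc
        by_cases h : ∀ x ∈ X, x ≤ c
        · exact Or.inl (sSup_le h)
        · push_neg at h
          obtain ⟨x, hxX, hxc⟩ := h
          rcases hC.total (hX hxX) hc with h1 | h1
          · exact absurd h1 hxc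
          · exact Or.inr (h1.trans (le_sSup hxX))
      · apply maxChain_mem_of_comparable hmax
        intro c hc
        by_cases h : ∀ x ∈ X, c ≤ x
        · exact Or.inr (le_sInf h)
        · push_neg at h
          obtain ⟨x, hxX, hxc⟩ := h
          rcases hC.total (hX hxX) hc with h1 | h1
          · exact Or.inl ((sInf_le hxX).trans h1)
          · exact absurd h1 hxc
    · intro x hx y hy hxy
      by_contra hno
      push_neg at hno
      -- midpoint
      set m : Fin d → 𝕀 := fun i =>
        ⟨((x i : ℝ) + (y i : ℝ)) / 2, by
          constructor
          · have := (x i).2.1; have := (y i).2.1; linarith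
          · have := (x i).2.2; have := (y i).2.2; linarith⟩
        with hm
      have hxley : x ≤ y := hxy.le
      have hxm : x ≤ m := by
        intro i
        have : (x i : ℝ) ≤ (y i : ℝ) := hxley i
        show (x i : ℝ) ≤ ((x i : ℝ) + (y i : ℝ)) / 2
        linarith
      have hmy : m ≤ y := by
        intro i
        have : (x i : ℝ) ≤ (y i : ℝ) := hxley i
        show ((x i : ℝ) + (y i : ℝ)) / 2 ≤ (y i : ℝ)
        linarith
      obtain ⟨i0, hi0⟩ : ∃ i, x i < y i := by
        by_contra hall
        push_neg at hall
        exact hxy.ne (le_antisymm hxley fun i => hall i)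
      have hi0R : (x i0 : ℝ) < (y i0 : ℝ) := hi0
      have hxm' : x < m := by
        refine lt_of_le_of_ne hxm fun h => ?_
        have h0 : (x i0 : ℝ) = ((x i0 : ℝ) + (y i0 : ℝ)) / 2 :=
          congrArg Subtype.val (congrFun h i0)
        linarith
      have hmy' : m < y := by
        refine lt_of_le_of_ne hmy fun h => ?_
        have h0 : ((x i0 : ℝ) + (y i0 : ℝ)) / 2 = (y i0 : ℝ) :=
          congrArg Subtype.val (congrFun h i0)
        linarith
      have hmC : m ∈ C := by
        apply maxChain_mem_of_comparable hmax
        intro c hc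
        rcases hC.total hc hx with h1 | h1
        · exact Or.inr (h1.trans hxm)
        rcases hC.total hy hc with h2 | h2
        · exact Or.inl (hmy.trans h2)
        have : ¬ (x < c ∧ c < y) := fun ⟨ha, hb⟩ => hno c hc ha hb
        rcases eq_or_lt_of_le h1 with rfl | h1'
        · exact Or.inr hxm
        rcases eq_or_lt_of_le h2 with rfl | h2'
        · exact Or.inl hmy
        exact absurd ⟨h1', h2'⟩ this
      exact hno m hmC hxm' hmy'
  · rintro ⟨hC, hcl, hdens⟩
    refine ⟨hC, fun t ht hCt => ?_⟩
    refine Set.Subset.antisymm hCt fun z hz => ?_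
    by_cases hzC : z ∈ C
    · exact hzC
    set A : Set (Fin d → 𝕀) := {c | c ∈ C ∧ c ≤ z} with hA
    set B : Set (Fin d → 𝕀) := {c | c ∈ C ∧ z ≤ c} with hB
    have haC : sSup A ∈ C := (hcl A fun c hc => hc.1).1
    have hbC : sInf B ∈ C := (hcl B fun c hc => hc.1).2
    have haz : sSup A ≤ z := sSup_le fun c hc => hc.2
    have hzb : z ≤ sInf B := le_sInf fun c hc => hc.2
    have ha' : sSup A < z := lt_of_le_of_ne haz fun h => hzC (h ▸ haC)
    have hb' : z < sInf B := lt_of_le_of_ne hzb fun h => hzC (h ▸ hbC)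
    obtain ⟨w, hwC, hw1, hw2⟩ := hdens _ haC _ hbC (ha'.trans hb')
    rcases ht.total (hCt hwC) hz with h1 | h1
    · exact absurd (le_sSup (show w ∈ A from ⟨hwC, h1⟩)) hw1.not_ge
    · exact absurd (sInf_le (show w ∈ B from ⟨hwC, h1⟩)) hw2.not_ge

end
end

section
/- Let d ≥ 2 and C ⊆ 𝕀^d. Then C is a maximal chain of 𝕀^d if and only if there exists a monotone, topologically continuous map p : 𝕀 → 𝕀^d with p(0) = (0,…,0), p(1) = (1,…,1), whose image is C. -/
noncomputable section

namespace St11Aux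

def sig (d : ℕ) (c : Fin d → 𝕀) : ℝ := ∑ i, (c i : ℝ)

lemma sig_mono {d : ℕ} {c c' : Fin d → 𝕀} (h : c ≤ c') : sig d c ≤ sig d c' :=
  Finset.sum_le_sum fun i _ => Subtype.coe_le_coe.2 (h i)

lemma eq_of_le_sig {d : ℕ} {c c' : Fin d → 𝕀} (h : c ≤ c') (hs : sig d c' ≤ sig d c) :
    c = c' := by
  have h0 : ∑ i : Fin d, ((c' i : ℝ) - c i) = 0 := by
    have h1 := sig_mono h
    simp only [sig] at h1 hs
    rw [Finset.sum_sub_distrib]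
    linarith
  funext i
  have h2 := (Finset.sum_eq_zero_iff_of_nonneg
    (fun j _ => sub_nonneg.2 (Subtype.coe_le_coe.2 (h j)))).1 h0 i (Finset.mem_univ i)
  exact Subtype.ext (by linarith)

lemma le_of_comp {d : ℕ} {c c' : Fin d → 𝕀} (h : c ≤ c' ∨ c' ≤ c)
    (hs : sig d c ≤ sig d c') : c ≤ c' := by
  rcases h with h | h
  · exact h
  · exact (eq_of_le_sig h hs) ▸ le_rfl

lemma inj_of_comp {d : ℕ} {c c' : Fin d → 𝕀} (h : c ≤ c' ∨ c' ≤ c)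
    (hs : sig d c = sig d c') : c = c' := by
  rcases h with h | h
  · exact eq_of_le_sig h hs.ge
  · exact (eq_of_le_sig h hs.le).symm

lemma sig_cont (d : ℕ) : Continuous (sig d) :=
  continuous_finset_sum _ fun i _ => continuous_subtype_val.comp (continuous_apply i)

lemma mem_of_comp {d : ℕ} {C : Set (Fin d → 𝕀)} (hmax : IsMaxChain (· ≤ ·) C)
    (x : Fin d → 𝕀) (hx : ∀ c ∈ C, x ≤ c ∨ c ≤ x) : x ∈ C := by
  have h := hmax.2 (hmax.1.insert fun b hb _ => hx b hb) (Set.subset_insert x C)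
  rw [h]; exact Set.mem_insert x C

lemma zero_mem {d : ℕ} {C : Set (Fin d → 𝕀)} (hmax : IsMaxChain (· ≤ ·) C) :
    (fun _ => (0:𝕀)) ∈ C :=
  mem_of_comp hmax _ fun c _ => Or.inl fun i => unitInterval.nonneg' 

lemma one_mem {d : ℕ} {C : Set (Fin d → 𝕀)} (hmax : IsMaxChain (· ≤ ·) C) :
    (fun _ => (1:𝕀)) ∈ C :=
  mem_of_comp hmax _ fun c _ => Or.inr fun i => unitInterval.le_one' 

lemma isClosed_of_max {d : ℕ} {C : Set (Fin d → 𝕀)} (hmax : IsMaxChain (· ≤ ·) C) :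
    IsClosed C := by
  have hch : IsChain (· ≤ ·) (closure C) := by
    intro x hx y hy _
    have hcl : IsClosed {q : (Fin d → 𝕀) × (Fin d → 𝕀) | q.1 ≤ q.2 ∨ q.2 ≤ q.1} :=
      (isClosed_le continuous_fst continuous_snd).union (isClosed_le continuous_snd continuous_fst)
    have hsub : C ×ˢ C ⊆ {q : (Fin d → 𝕀) × (Fin d → 𝕀) | q.1 ≤ q.2 ∨ q.2 ≤ q.1} := by
      rintro ⟨u, v⟩ ⟨hu, hv⟩
      rcases eq_or_ne u v with rfl | hne
      · exact Or.inl le_rfl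
      · exact hmax.1 hu hv hne
    have hmem : (x, y) ∈ closure (C ×ˢ C) := by
      rw [closure_prod_eq]; exact ⟨hx, hy⟩
    exact hcl.closure_subset_iff.2 hsub hmem
  have h := hmax.2 hch subset_closure
  rw [h]; exact isClosed_closure

lemma sig_zero (d : ℕ) : sig d (fun _ => (0:𝕀)) = 0 := by simp [sig]

lemma sig_one (d : ℕ) : sig d (fun _ => (1:𝕀)) = d := by simp [sig]

lemma exists_sig {d : ℕ} {C : Set (Fin d → 𝕀)} (hmax : IsMaxChain (· ≤ ·) C)
    (s : ℝ) (h0 : 0 ≤ s) (h1 : s ≤ d) : ∃ c ∈ C, sig d c = s := by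
  by_contra hne
  push_neg at hne
  have hCc : IsCompact C := (isClosed_of_max hmax).isCompact
  -- A
  have hAcp : IsCompact (C ∩ {c | sig d c ≤ s}) :=
    hCc.inter_right (isClosed_le (sig_cont d) continuous_const)
  have hAne : (C ∩ {c | sig d c ≤ s}).Nonempty :=
    ⟨fun _ => 0, zero_mem hmax, by simp [sig_zero d, h0]⟩
  obtain ⟨a, haA, hamax⟩ := hAcp.exists_isMaxOn hAne (sig_cont d).continuousOn
  have haC := haA.1
  have ha_lt : sig d a < s := lt_of_le_of_ne haA.2 (hne a haC)
  have ha_ge : ∀ c ∈ C, sig d c ≤ s → c ≤ a := fun c hc hcs =>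
    le_of_comp (hmax.1.total hc haC) (hamax ⟨hc, hcs⟩)
  -- B
  have hBcp : IsCompact (C ∩ {c | s ≤ sig d c}) :=
    hCc.inter_right (isClosed_le continuous_const (sig_cont d))
  have hBne : (C ∩ {c | s ≤ sig d c}).Nonempty :=
    ⟨fun _ => 1, one_mem hmax, by simp [sig_one d, h1]⟩
  obtain ⟨b, hbB, hbmin⟩ := hBcp.exists_isMinOn hBne (sig_cont d).continuousOn
  have hbC := hbB.1
  have hb_gt : s < sig d b := lt_of_le_of_ne hbB.2 (Ne.symm (hne b hbC))
  have hb_le : ∀ c ∈ C, s ≤ sig d c → b ≤ c := fun c hc hcs =>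
    le_of_comp (hmax.1.total hbC hc) (hbmin ⟨hc, hcs⟩)
  have hab : a ≤ b := le_of_comp (hmax.1.total haC hbC) (by linarith)
  -- midpoint
  set m : Fin d → 𝕀 := fun i => ⟨((a i : ℝ) + b i) / 2,
    ⟨by have := (a i).2.1; have := (b i).2.1; linarith,
     by have := (a i).2.2; have := (b i).2.2; linarith⟩⟩ with hm
  have ham : a ≤ m := fun i => by
    have h : (a i : ℝ) ≤ b i := Subtype.coe_le_coe.2 (hab i)
    show (a i : ℝ) ≤ ((a i : ℝ) + b i) / 2
    linarith
  have hmb : m ≤ b := fun i => by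
    have h : (a i : ℝ) ≤ b i := Subtype.coe_le_coe.2 (hab i)
    show ((a i : ℝ) + b i) / 2 ≤ (b i : ℝ)
    linarith
  have hmC : m ∈ C := by
    apply mem_of_comp hmax
    intro c hc
    rcases lt_or_gt_of_ne (hne c hc) with hlt | hgt
    · exact Or.inr ((ha_ge c hc hlt.le).trans ham)
    · exact Or.inl (hmb.trans (hb_le c hc hgt.le))
  have hsm : sig d m = (sig d a + sig d b) / 2 := by
    simp only [sig, hm]
    rw [← Finset.sum_add_distrib, ← Finset.sum_div]
  rcases lt_or_gt_of_ne (hne m hmC) with hlt | hgt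
  · have := sig_mono (ha_ge m hmC hlt.le)
    linarith
  · have := sig_mono (hb_le m hmC hgt.le)
    linarith

end St11Aux

open St11Aux

/-- `C ⊆ 𝕀^d` is a maximal chain iff it is the image of a monotone
topologically continuous map `p : 𝕀 → 𝕀^d` with `p 0 = (0,…,0)` and `p 1 = (1,…,1)`. -/
theorem statement11 (d : ℕ) (hd : 2 ≤ d) (C : Set (Fin d → 𝕀)) :
    IsMaxChain (· ≤ ·) C ↔
      ∃ p : 𝕀 → (Fin d → 𝕀), Monotone p ∧ Continuous p ∧
        p 0 = (fun _ => 0) ∧ p 1 = (fun _ => 1) ∧ Set.range p = C := by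
  have hdpos : (0:ℝ) < d := by have : 0 < d := lt_of_lt_of_le two_pos hd; exact_mod_cast this
  constructor
  · intro hmax
    have hex : ∀ t : 𝕀, ∃ c ∈ C, sig d c = d * t := by
      intro t
      refine exists_sig hmax _ (mul_nonneg hdpos.le t.2.1) ?_
      calc (d:ℝ) * t ≤ d * 1 := mul_le_mul_of_nonneg_left t.2.2 hdpos.le
        _ = d := mul_one _
    choose p hpC hps using hex
    have hmono : Monotone p := by
      intro t t' htt
      refine le_of_comp (hmax.1.total (hpC t) (hpC t')) ?_
      rw [hps, hps]
      exact mul_le_mul_of_nonneg_left (Subtype.coe_le_coe.2 htt) hdpos.le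
    have hinj : ∀ (t : 𝕀) (c : Fin d → 𝕀), c ∈ C → sig d c = d * (t:ℝ) → p t = c := by
      intro t c hc hs
      exact inj_of_comp (hmax.1.total (hpC t) hc) (by rw [hps, hs])
    -- key Lipschitz estimate
    have key : ∀ i : Fin d, ∀ t t' : 𝕀, t ≤ t' →
        (p t' i : ℝ) - p t i ≤ d * ((t' : ℝ) - t) := by
      intro i t t' h
      have hm := hmono h
      have h1 : (p t' i : ℝ) - p t i ≤ ∑ j, ((p t' j : ℝ) - p t j) := by
        refine Finset.single_le_sum (fun j _ => sub_nonneg.2 (Subtype.coe_le_coe.2 (hm j)))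
          (Finset.mem_univ i)
      have h2 : ∑ j, ((p t' j : ℝ) - p t j) = d * ((t' : ℝ) - t) := by
        rw [Finset.sum_sub_distrib]
        have := hps t; have := hps t'
        simp only [sig] at *
        linarith
      linarith
    have hcont : Continuous p := by
      refine continuous_pi fun i => ?_
      refine continuous_induced_rng.2 ?_
      have key2 : ∀ t t' : 𝕀, (p t i : ℝ) - p t' i ≤ d * |(t : ℝ) - t'| := by
        intro t t'
        rcases le_total t t' with h | h
        · have h1 := hmono h i
          have h2 : (0:ℝ) ≤ d * |(t:ℝ) - t'| := by positivity
          have := Subtype.coe_le_coe.2 h1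
          linarith
        · have := key i t' t h
          have h2 : (t:ℝ) - t' ≤ |(t:ℝ) - t'| := le_abs_self _
          nlinarith
      rw [Metric.continuous_iff]
      intro t ε hε
      refine ⟨ε / d, by positivity, fun t' ht' => ?_⟩
      have hd1 : dist t' t = |(t' : ℝ) - t| := rfl
      have : dist ((p t' i : ℝ)) ((p t i : ℝ)) = |(p t' i : ℝ) - p t i| := Real.dist_eq _ _
      show dist ((p t' i : ℝ)) ((p t i : ℝ)) < ε
      rw [this, abs_sub_lt_iff]
      rw [hd1] at ht'
      have hlt : d * |(t' : ℝ) - t| < ε := by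
        rw [lt_div_iff₀ hdpos] at ht'
        linarith [ht']
      have k1 := key2 t' t
      have k2 := key2 t t'
      rw [abs_sub_comm] at k2
      constructor <;> linarith
    refine ⟨p, hmono, hcont, ?_, ?_, ?_⟩
    · funext i
      have h0 : sig d (p 0) = 0 := by
        have := hps 0
        simpa using this
      have := (Finset.sum_eq_zero_iff_of_nonneg
        (fun j _ => (p 0 j).2.1)).1 h0 i (Finset.mem_univ i)
      exact Subtype.ext (by push_cast; exact this)
    · funext i
      have h0 : sig d (p 1) = d := by
        have := hps 1
        simpa using this
      have hsum : ∑ j : Fin d, ((1:ℝ) - p 1 j) = 0 := by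
        rw [Finset.sum_sub_distrib]
        simp only [Finset.sum_const, Finset.card_univ, Fintype.card_fin, nsmul_eq_mul, mul_one]
        simp only [sig] at h0
        linarith
      have := (Finset.sum_eq_zero_iff_of_nonneg
        (fun j _ => sub_nonneg.2 (p 1 j).2.2)).1 hsum i (Finset.mem_univ i)
      exact Subtype.ext (by push_cast; linarith)
    · ext c
      constructor
      · rintro ⟨t, rfl⟩; exact hpC t
      · intro hc
        have hsc : sig d c ∈ Set.Icc (0:ℝ) d := by
          constructor
          · exact Finset.sum_nonneg fun j _ => (c j).2.1
          · calc sig d c ≤ ∑ _j : Fin d, (1:ℝ) :=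
                Finset.sum_le_sum fun j _ => (c j).2.2
              _ = d := by simp
        set t : 𝕀 := ⟨sig d c / d, div_nonneg hsc.1 hdpos.le, by
          rw [div_le_one hdpos]; exact hsc.2⟩ with ht
        refine ⟨t, hinj t c hc ?_⟩
        show sig d c = d * (sig d c / d)
        field_simp
  · rintro ⟨p, hmono, hcont, hp0, hp1, hrange⟩
    constructor
    · rintro x hx y hy _
      rw [← hrange] at hx hy
      obtain ⟨s, rfl⟩ := hx
      obtain ⟨t, rfl⟩ := hy
      rcases le_total s t with h | h
      · exact Or.inl (hmono h)
      · exact Or.inr (hmono h)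
    · intro S hS hCS
      refine subset_antisymm hCS fun x hx => ?_
      have hcomp : ∀ t : 𝕀, p t ≤ x ∨ x ≤ p t := by
        intro t
        have hptS : p t ∈ S := hCS (hrange ▸ Set.mem_range_self t)
        rcases eq_or_ne (p t) x with h | h
        · exact Or.inl h.le
        · exact hS hptS hx h
      set K1 := {t : 𝕀 | p t ≤ x} with hK1def
      set K2 := {t : 𝕀 | x ≤ p t} with hK2def
      have hK1 : IsClosed K1 := isClosed_le hcont continuous_const
      have hK2 : IsClosed K2 := isClosed_le continuous_const hcont
      by_cases hint : (K1 ∩ K2).Nonempty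
      · obtain ⟨t, ht1, ht2⟩ := hint
        have : x = p t := le_antisymm ht2 ht1
        rw [this, ← hrange]
        exact Set.mem_range_self t
      · rw [Set.not_nonempty_iff_eq_empty] at hint
        have hunion : K1 ∪ K2 = Set.univ := by
          ext t; simp only [Set.mem_union, Set.mem_univ, iff_true]
          exact hcomp t
        have hK1eq : K1 = K2ᶜ := by
          apply subset_antisymm
          · intro t ht hmem
            exact Set.notMem_empty t (hint ▸ ⟨ht, hmem⟩)
          · intro t ht
            rcases hcomp t with h | h
            · exact h
            · exact absurd h ht
        have hclopen : IsClopen K1 := ⟨hK1, hK1eq ▸ hK2.isOpen_compl⟩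
        rcases isClopen_iff.1 hclopen with hempty | huniv
        · exfalso
          have h0 : (0:𝕀) ∈ K1 := by
            show p 0 ≤ x
            rw [hp0]
            exact fun i => (x i).2.1
          rw [hempty] at h0
          exact Set.notMem_empty _ h0
        · have h1 : (1:𝕀) ∈ K1 := huniv ▸ Set.mem_univ _
          have hx1 : x = p 1 := by
            refine le_antisymm (fun i => ?_) h1
            rw [hp1]
            exact (x i).2.2
          rw [hx1, ← hrange]
          exact Set.mem_range_self 1

end
end

section
/- Let f : 𝕀 → 𝕀 be monotone. Then C_f := {(x,y) ∈ 𝕀² | f^∨(x) ≤ y ≤ f^∧(x)} is a maximal chain of 𝕀² (with the componentwise order). -/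
noncomputable section

lemma mem_Cf2_self (f : 𝕀 → 𝕀) (hf : Monotone f) (x : 𝕀) : (x, f x) ∈ Cf2 f :=
  ⟨iSup_le fun y => hf y.2.le, le_iInf fun y => hf y.2.le⟩

lemma Cf2_key (f : 𝕀 → 𝕀) {a b : 𝕀} (h : a < b) : mCl f a ≤ jCl f b := by
  obtain ⟨m, hm1, hm2⟩ := exists_between h
  calc mCl f a ≤ f m := iInf_le (fun y : {y : 𝕀 // a < y} => f y.1) ⟨m, hm1⟩
    _ ≤ jCl f b := le_iSup (fun y : {y : 𝕀 // y.1 < b} => f y.1) ⟨m, hm2⟩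

/-- for monotone `f : 𝕀 → 𝕀`, the set
`C_f = {(x,y) | f^∨(x) ≤ y ≤ f^∧(x)}` is a maximal chain of `𝕀²`. -/
theorem statement12 (f : 𝕀 → 𝕀) (hf : Monotone f) :
    IsMaxChain (· ≤ ·) (Cf2 f) := by
  constructor
  · intro p hp q hq _
    rcases lt_trichotomy p.1 q.1 with h | h | h
    · exact Or.inl ⟨h.le, hp.2.trans ((Cf2_key f h).trans hq.1)⟩
    · rcases le_total p.2 q.2 with h2 | h2
      · exact Or.inl ⟨h.le, h2⟩
      · exact Or.inr ⟨h.ge, h2⟩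
    · exact Or.inr ⟨h.le, hq.2.trans ((Cf2_key f h).trans hp.1)⟩
  · intro t ht hsub
    refine (Set.Subset.antisymm hsub fun p hp => ⟨?_, ?_⟩)
    · refine iSup_le fun x' => ?_
      have hmem : ((x'.1 : 𝕀), f x'.1) ∈ t := hsub (mem_Cf2_self f hf x'.1)
      have hne : ((x'.1 : 𝕀), f x'.1) ≠ p := by
        intro he
        have h1 : (x'.1 : 𝕀) = p.1 := congrArg Prod.fst he
        have := x'.2
        rw [h1] at this
        exact lt_irrefl _ this
      rcases ht hmem hp hne with h | h
      · exact h.2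
      · exact absurd h.1 (not_le.mpr x'.2)
    · refine le_iInf fun x' => ?_
      have hmem : ((x'.1 : 𝕀), f x'.1) ∈ t := hsub (mem_Cf2_self f hf x'.1)
      have hne : ((x'.1 : 𝕀), f x'.1) ≠ p := by
        intro he
        have h1 : (x'.1 : 𝕀) = p.1 := congrArg Prod.fst he
        have := x'.2
        rw [h1] at this
        exact lt_irrefl _ this
      rcases ht hmem hp hne with h | h
      · exact absurd h.1 (not_le.mpr x'.2)
      · exact h.2

end
end

section
/- Let C ⊆ 𝕀² be a maximal chain and define f_C^-(x) := ⨅{y | (x,y) ∈ C} and f_C^+(x) := ⨆{y | (x,y) ∈ C}. Then f_C^- is join-continuous, f_C^+ is meet-continuous, f_C^- = (f_C^+)^∨, f_C^+ = (f_C^-)^∧, and C = C_{f_C^-} = {(x,y) ∈ 𝕀² | (f_C^-)^∨(x) ≤ y ≤ (f_C^-)^∧(x)}. -/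
noncomputable section

/-! A maximal chain `C` of a complete lattice contains every point comparable with all of its
elements; in particular it is closed under arbitrary suprema and infima. In `𝕀²` this makes each
fibre `{y | (x, y) ∈ C}` the closed interval `[f_C^-(x), f_C^+(x)]`, and the supremum of the graph
points `(x, f_C^-(x))`, `x ∈ S`, is a point of `C` over `⨆ S`, which gives join-continuity of
`f_C^-`. Since `𝕀` is densely ordered, `x = ⨆ {x' | x' < x}`, so a join-continuous `f` satisfies
`f = f^∨`; together with `f_C^+(x) ≤ f_C^-(x')` for `x < x'` this yields the remaining identities. -/

section MaxChain

variable {P : Type*} {C : Set P}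

theorem IsMaxChain.mem_of_forall_comparable [LE P] (hC : IsMaxChain (· ≤ ·) C) {p : P}
    (hp : ∀ c ∈ C, p ≤ c ∨ c ≤ p) : p ∈ C := by
  rw [hC.2 (hC.1.insert fun c hc _ => hp c hc) (Set.subset_insert p C)]
  exact Set.mem_insert p C

theorem IsMaxChain.sSup_mem [CompleteLattice P] (hC : IsMaxChain (· ≤ ·) C) {S : Set P}
    (hS : S ⊆ C) : sSup S ∈ C := by
  refine hC.mem_of_forall_comparable fun c hc => ?_
  by_cases h : ∀ s ∈ S, s ≤ c
  · exact Or.inl (sSup_le h)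
  · push Not at h
    obtain ⟨s, hs, hsc⟩ := h
    exact Or.inr (((hC.1.total hc (hS hs)).resolve_right hsc).trans (le_sSup hs))

theorem IsMaxChain.sInf_mem [CompleteLattice P] (hC : IsMaxChain (· ≤ ·) C) {S : Set P}
    (hS : S ⊆ C) : sInf S ∈ C :=
  IsMaxChain.sSup_mem (P := Pᵒᵈ) hC.symm hS

end MaxChain

section ProdChain

variable {α β : Type*} {C : Set (α × β)}

theorem IsChain.snd_le_of_fst_lt [Preorder α] [Preorder β] (hC : IsChain (· ≤ ·) C)
    {x x' : α} {y y' : β} (h : (x, y) ∈ C) (h' : (x', y') ∈ C) (hx : x < x') : y ≤ y' :=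
  ((hC.total h h').resolve_right fun hle => hx.not_ge hle.1).2

theorem IsChain.monotone_of_forall_mem [PartialOrder α] [Preorder β] (hC : IsChain (· ≤ ·) C)
    {g : α → β} (hg : ∀ x, (x, g x) ∈ C) : Monotone g := by
  intro x x' h
  rcases h.lt_or_eq with h | rfl
  · exact hC.snd_le_of_fst_lt (hg x) (hg x') h
  · rfl

theorem IsMaxChain.mk_mem_of_le_of_le [Preorder α] [LinearOrder β] (hC : IsMaxChain (· ≤ ·) C)
    {x : α} {y₁ y y₂ : β} (h₁ : (x, y₁) ∈ C) (h₂ : (x, y₂) ∈ C) (hy₁ : y₁ ≤ y) (hy₂ : y ≤ y₂) :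
    (x, y) ∈ C := by
  refine hC.mem_of_forall_comparable fun c hc => ?_
  rcases hC.1.total h₁ hc with h₁c | hc₁
  · rcases hC.1.total hc h₂ with hc₂ | h₂c
    · rcases le_total y c.2 with hy | hy
      · exact Or.inl ⟨h₁c.1, hy⟩
      · exact Or.inr ⟨hc₂.1, hy⟩
    · exact Or.inl ((show (x, y) ≤ (x, y₂) from ⟨le_rfl, hy₂⟩).trans h₂c)
  · exact Or.inr (hc₁.trans ⟨le_rfl, hy₁⟩)

theorem IsMaxChain.exists_mk_mem [CompleteLinearOrder α] [CompleteLattice β]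
    (hC : IsMaxChain (· ≤ ·) C) (x : α) : ∃ y, (x, y) ∈ C := by
  set m := sSup {c ∈ C | c.1 ≤ x}
  have hm : m ∈ C := hC.sSup_mem (Set.sep_subset _ _)
  have hmx : m.1 ≤ x := (sSup_le fun c hc => ⟨hc.2, le_top⟩ : m ≤ (x, ⊤)).1
  refine ⟨m.2, hC.mem_of_forall_comparable fun c hc => ?_⟩
  rcases le_or_gt c.1 x with hcx | hxc
  · exact Or.inr ⟨hcx, (le_sSup ⟨hc, hcx⟩ : c ≤ m).2⟩
  · have hmc : m ≤ c := (hC.1.total hm hc).resolve_right fun hcm => hxc.not_ge (hcm.1.trans hmx)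
    exact Or.inl ⟨hxc.le, hmc.2⟩

theorem IsMaxChain.mk_sInf_mem [CompleteLinearOrder α] [CompleteLattice β]
    (hC : IsMaxChain (· ≤ ·) C) (x : α) : (x, sInf {y | (x, y) ∈ C}) ∈ C := by
  obtain ⟨y₀, hy₀⟩ := hC.exists_mk_mem x
  set m := sInf {c ∈ C | c.1 = x}
  have hm : m = (x, sInf {y | (x, y) ∈ C}) := by
    refine le_antisymm (Prod.le_def.2 ⟨(sInf_le ⟨hy₀, rfl⟩ : m ≤ (x, y₀)).1, ?_⟩) ?_
    · exact le_sInf fun y hy => (sInf_le (show (x, y) ∈ {c ∈ C | c.1 = x} from ⟨hy, rfl⟩) :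
        m ≤ (x, y)).2
    · refine le_sInf fun c hc => Prod.le_def.2 ⟨hc.2.ge, sInf_le ?_⟩
      show (x, c.2) ∈ C
      rw [← hc.2]
      exact hc.1
  exact hm ▸ hC.sInf_mem (Set.sep_subset _ _)

theorem IsMaxChain.mk_sSup_mem [CompleteLinearOrder α] [CompleteLattice β]
    (hC : IsMaxChain (· ≤ ·) C) (x : α) : (x, sSup {y | (x, y) ∈ C}) ∈ C :=
  IsMaxChain.mk_sInf_mem (α := αᵒᵈ) (β := βᵒᵈ) hC.symm x

theorem IsMaxChain.mk_sSup_iSup_mem [CompleteLattice α] [CompleteLattice β]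
    (hC : IsMaxChain (· ≤ ·) C) {g : α → β} (hg : ∀ x, (x, g x) ∈ C) (S : Set α) :
    (sSup S, ⨆ x ∈ S, g x) ∈ C := by
  convert hC.sSup_mem (Set.image_subset_iff.2 fun x _ => hg x : (fun x => (x, g x)) '' S ⊆ C)
    using 1
  rw [sSup_image]
  ext <;> simp [Prod.fst_iSup, Prod.snd_iSup, sSup_eq_iSup]

theorem IsMaxChain.mk_sInf_iInf_mem [CompleteLattice α] [CompleteLattice β]
    (hC : IsMaxChain (· ≤ ·) C) {g : α → β} (hg : ∀ x, (x, g x) ∈ C) (S : Set α) :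
    (sInf S, ⨅ x ∈ S, g x) ∈ C :=
  IsMaxChain.mk_sSup_iSup_mem (α := αᵒᵈ) (β := βᵒᵈ) hC.symm hg S

end ProdChain

theorem JoinCont.jCl_eq {f : 𝕀 → 𝕀} (hf : JoinCont f) : jCl f = f := by
  funext x
  calc jCl f x = ⨆ y ∈ Set.Iio x, f y := iSup_subtype'' (Set.Iio x) f
    _ = f x := by rw [← hf, (Order.IsSuccPrelimit.of_dense x).sSup_Iio]

theorem MeetCont.mCl_eq {f : 𝕀 → 𝕀} (hf : MeetCont f) : mCl f = f := by
  funext x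
  calc mCl f x = ⨅ y ∈ Set.Ioi x, f y := iInf_subtype'' (Set.Ioi x) f
    _ = f x := by
      have hx : sInf (Set.Ioi x) = x :=
        (Order.IsSuccPrelimit.of_dense (OrderDual.toDual x)).sSup_Iio
      rw [← hf, hx]

section MaxChainUnitSquare

variable {C : Set (𝕀 × 𝕀)}

theorem fCm_mem (hC : IsMaxChain (· ≤ ·) C) (x : 𝕀) : (x, fCm C x) ∈ C := hC.mk_sInf_mem x

theorem fCp_mem (hC : IsMaxChain (· ≤ ·) C) (x : 𝕀) : (x, fCp C x) ∈ C := hC.mk_sSup_mem x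

theorem fCm_le_fCp (hC : IsMaxChain (· ≤ ·) C) (x : 𝕀) : fCm C x ≤ fCp C x :=
  sInf_le (fCp_mem hC x)

theorem fCp_le_fCm_of_lt (hC : IsMaxChain (· ≤ ·) C) {x x' : 𝕀} (h : x < x') :
    fCp C x ≤ fCm C x' :=
  hC.1.snd_le_of_fst_lt (fCp_mem hC x) (fCm_mem hC x') h

theorem joinCont_fCm (hC : IsMaxChain (· ≤ ·) C) : JoinCont (fCm C) := fun S =>
  le_antisymm (sInf_le (hC.mk_sSup_iSup_mem (fCm_mem hC) S))
    (iSup₂_le fun _ hx => hC.1.monotone_of_forall_mem (fCm_mem hC) (le_sSup hx))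

theorem meetCont_fCp (hC : IsMaxChain (· ≤ ·) C) : MeetCont (fCp C) := fun S =>
  le_antisymm (le_iInf₂ fun _ hx => hC.1.monotone_of_forall_mem (fCp_mem hC) (sInf_le hx))
    (le_sSup (hC.mk_sInf_iInf_mem (fCp_mem hC) S))

theorem fCm_eq_jCl_fCp (hC : IsMaxChain (· ≤ ·) C) : fCm C = jCl (fCp C) := by
  funext x
  refine le_antisymm ?_ (iSup_le fun y => fCp_le_fCm_of_lt hC y.2)
  calc fCm C x = jCl (fCm C) x := by rw [(joinCont_fCm hC).jCl_eq]
    _ ≤ jCl (fCp C) x := iSup_mono fun y => fCm_le_fCp hC y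

theorem fCp_eq_mCl_fCm (hC : IsMaxChain (· ≤ ·) C) : fCp C = mCl (fCm C) := by
  funext x
  refine le_antisymm (le_iInf fun y => fCp_le_fCm_of_lt hC y.2) ?_
  calc mCl (fCm C) x ≤ mCl (fCp C) x := iInf_mono fun y => fCm_le_fCp hC y
    _ = fCp C x := by rw [(meetCont_fCp hC).mCl_eq]

theorem eq_Cf2_fCm (hC : IsMaxChain (· ≤ ·) C) : C = Cf2 (fCm C) := by
  ext ⟨x, y⟩
  rw [Cf2, (joinCont_fCm hC).jCl_eq, ← fCp_eq_mCl_fCm hC]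
  exact ⟨fun h => ⟨sInf_le h, le_sSup h⟩,
    fun ⟨h₁, h₂⟩ => hC.mk_mem_of_le_of_le (fCm_mem hC x) (fCp_mem hC x) h₁ h₂⟩

end MaxChainUnitSquare

/-- for a maximal chain `C ⊆ 𝕀²`, `f_C^-` is join-continuous, `f_C^+`
is meet-continuous, `f_C^- = (f_C^+)^∨`, `f_C^+ = (f_C^-)^∧`, and `C = C_{f_C^-}`. -/
theorem statement13 (C : Set (𝕀 × 𝕀)) (hC : IsMaxChain (· ≤ ·) C) :
    JoinCont (fCm C) ∧ MeetCont (fCp C) ∧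
    fCm C = jCl (fCp C) ∧ fCp C = mCl (fCm C) ∧
    C = Cf2 (fCm C) :=
  ⟨joinCont_fCm hC, meetCont_fCp hC, fCm_eq_jCl_fCp hC, fCp_eq_mCl_fCm hC, eq_Cf2_fCm hC⟩

end
end
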